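/- Every IPC-component is extendible: if B = ⋀Γ ∧ ⋀Δ where Γ consists of atoms and Δ consists of implications C → D with atomic antecedent C such that IPC ⊬ ⋀Γ → C, then for every finite class 𝒦 of finite rooted Kripke models of B, there is a variant of the disjoint sum Σ(𝒦) with fresh root (changing only the root valuation) which is a model of B. -/

import Mathlib

inductive Fm : Type
  | bot : Fm
  | atom : ℕ → Fm
  | and : Fm → Fm → Fm
  | or : Fm → Fm → Fm
  | imp : Fm → Fm → Fm
deriving DecidableEq

namespace Fm

def neg (A : Fm) : Fm := A.imp .bot
def top : Fm := Fm.bot.imp .bot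
def iff (A B : Fm) : Fm := (A.imp B).and (B.imp A)

def subst (θ : ℕ → Fm) : Fm → Fm
  | bot => bot
  | atom n => θ n
  | and A B => (A.subst θ).and (B.subst θ)
  | or A B => (A.subst θ).or (B.subst θ)
  | imp A B => (A.subst θ).imp (B.subst θ)

def atoms : Fm → Finset ℕ
  | bot => ∅
  | atom n => {n}
  | and A B => A.atoms ∪ B.atoms
  | or A B => A.atoms ∪ B.atoms
  | imp A B => A.atoms ∪ B.atoms

/-- maximal nesting of implications in the left/overall: `c→`. -/
def cimp : Fm → ℕ
  | bot => 0
  | atom _ => 0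
  | and A B => max A.cimp B.cimp
  | or A B => max A.cimp B.cimp
  | imp A B => 1 + max A.cimp B.cimp

end Fm

def bigAndL (l : List Fm) : Fm := l.foldr Fm.and Fm.top
def bigOrL (l : List Fm) : Fm := l.foldr Fm.or Fm.bot

/-- nonempty disjunction -/
def bigOrNE : Fm → List Fm → Fm
  | A, [] => A
  | A, B :: l => A.or (bigOrNE B l)

/-- Hilbert-style intuitionistic propositional calculus. -/
inductive IPC : Fm → Prop
  | imp_k (A B : Fm) : IPC (A.imp (B.imp A))
  | imp_s (A B C : Fm) : IPC ((A.imp (B.imp C)).imp ((A.imp B).imp (A.imp C)))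
  | and_intro (A B : Fm) : IPC (A.imp (B.imp (A.and B)))
  | and_left (A B : Fm) : IPC ((A.and B).imp A)
  | and_right (A B : Fm) : IPC ((A.and B).imp B)
  | or_inl (A B : Fm) : IPC (A.imp (A.or B))
  | or_inr (A B : Fm) : IPC (B.imp (A.or B))
  | or_elim (A B C : Fm) : IPC ((A.imp C).imp ((B.imp C).imp ((A.or B).imp C)))
  | exfalso (A : Fm) : IPC (Fm.bot.imp A)
  | mp {A B : Fm} : IPC (A.imp B) → IPC A → IPC B

/-- Γ-preservativity in the logic T : `A ⊳_{T,Γ} B`. -/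
def Pres (T : Fm → Prop) (Γ : Set Fm) (A B : Fm) : Prop :=
  ∀ E ∈ Γ, T (E.imp A) → T (E.imp B)

/-- substitutions are identity on the parameters. -/
def IdOnPar (par : Finset ℕ) (θ : ℕ → Fm) : Prop :=
  ∀ p ∈ par, θ p = Fm.atom p

/-- implication-free formulas. -/
inductive NI : Fm → Prop
  | bot : NI .bot
  | atom (n : ℕ) : NI (.atom n)
  | and {A B : Fm} : NI A → NI B → NI (A.and B)
  | or {A B : Fm} : NI A → NI B → NI (A.or B)

/-- No Nested Implications in the Left. -/
inductive NNIL : Fm → Prop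
  | bot : NNIL .bot
  | atom (n : ℕ) : NNIL (.atom n)
  | and {A B : Fm} : NNIL A → NNIL B → NNIL (A.and B)
  | or {A B : Fm} : NNIL A → NNIL B → NNIL (A.or B)
  | imp {A B : Fm} : NI A → NNIL B → NNIL (A.imp B)

def IPCPrime (A : Fm) : Prop :=
  ∀ B C, IPC (A.imp (B.or C)) → IPC (A.imp B) ∨ IPC (A.imp C)

/-- T-components: `⋀Γ ∧ ⋀Δ`, Γ atoms, Δ implications with atomic
antecedents not T-provable from Γ. -/
def IsComponentOver (T : Fm → Prop) (B : Fm) : Prop :=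
  ∃ (as : List ℕ) (imps : List (ℕ × Fm)),
    B = (bigAndL (as.map Fm.atom)).and
          (bigAndL (imps.map fun p => (Fm.atom p.1).imp p.2)) ∧
    ∀ p ∈ imps, ¬ T ((bigAndL (as.map Fm.atom)).imp (Fm.atom p.1))

structure KModel : Type 1 where
  W : Type
  le : W → W → Prop
  val : W → ℕ → Prop

namespace KModel

def force (K : KModel) : Fm → K.W → Prop
  | .bot, _ => False
  | .atom n, w => K.val w n
  | .and A B, w => K.force A w ∧ K.force B w
  | .or A B, w => K.force A w ∨ K.force B w
  | .imp A B, w => ∀ u, K.le w u → K.force A u → K.force B u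

def IsIPC (K : KModel) : Prop :=
  (∀ w, K.le w w) ∧ (∀ {w u v}, K.le w u → K.le u v → K.le w v) ∧
  (∀ {w u}, K.le w u → K.le u w → w = u) ∧
  (∀ {w u} (a : ℕ), K.le w u → K.val w a → K.val u a)

def Rooted (K : KModel) : Prop := ∃ r, ∀ w, K.le r w

def Tree (K : KModel) : Prop :=
  ∀ w, {u | K.le u w}.Finite ∧
    ∀ u v, K.le u w → K.le v w → K.le u v ∨ K.le v u

/-- finite rooted tree intuitionistic Kripke model. -/
def IsFRT (K : KModel) : Prop := K.IsIPC ∧ Finite K.W ∧ K.Rooted ∧ K.Tree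

end KModel

/-- θ(K): same frame, valuation given by forcing of θ(a). -/
def substModel (θ : ℕ → Fm) (K : KModel) : KModel :=
  ⟨K.W, K.le, fun w a => K.force (θ a) w⟩

/-- disjoint sum of a family of models with a fresh root `none`,
whose valuation at the root is `V0`. -/
def sumModel {ι : Type} (M : ι → KModel) (V0 : ℕ → Prop) : KModel where
  W := Option (Σ i, (M i).W)
  le := fun x y =>
    x = none ∨ ∃ i w u, x = some ⟨i, w⟩ ∧ y = some ⟨i, u⟩ ∧ (M i).le w u
  val := fun x a => match x with
    | none => V0 a
    | some ⟨i, w⟩ => (M i).val w a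

/-- A is extendible: any finite family of (finite rooted tree) models of A
can be summed with a fresh root whose valuation (monotonely chosen)
can be arranged so that the sum is again a model of A. -/
def Extendible (A : Fm) : Prop :=
  ∀ (ι : Type), Finite ι → ∀ (M : ι → KModel),
    (∀ i, (M i).IsFRT ∧ ∀ w, (M i).force A w) →
    ∃ V0 : ℕ → Prop, (∀ a, V0 a → ∀ i w, (M i).val w a) ∧
      ∀ w, (sumModel M V0).force A w


/-!
Give the fresh root exactly the atoms of `Γ`. This is monotone because every world of every
model forces `⋀Γ`, and the root then forces `⋀Γ`. An implication `C → D` of `Δ` holds at the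
root: `C` is not in `Γ` (otherwise `IPC ⊢ ⋀Γ → C`), so `C` fails at the root itself, and at every
other world the implication is inherited from the component model containing it.
-/

theorem IPC.imp_trans {A B C : Fm} (hAB : IPC (A.imp B)) (hBC : IPC (B.imp C)) :
    IPC (A.imp C) :=
  .mp (.mp (.imp_s A B C) (.mp (.imp_k _ _) hBC)) hAB

theorem IPC.bigAndL_imp_of_mem {l : List Fm} {A : Fm} (hA : A ∈ l) :
    IPC ((bigAndL l).imp A) := by
  induction l with
  | nil => cases hA
  | cons B l ih =>
    rcases List.mem_cons.mp hA with rfl | hA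
    · exact .and_left _ _
    · exact (IPC.and_right _ _).imp_trans (ih hA)

namespace KModel

variable (K : KModel)

theorem force_bigAndL (l : List Fm) (w : K.W) :
    K.force (bigAndL l) w ↔ ∀ A ∈ l, K.force A w := by
  induction l with
  | nil => simp [bigAndL, Fm.top, force]
  | cons B l ih => simp [bigAndL, force, ← ih]

theorem force_bigAndL_map_atom (as : List ℕ) (w : K.W) :
    K.force (bigAndL (as.map Fm.atom)) w ↔ ∀ a ∈ as, K.val w a := by
  simp [force_bigAndL, force]

end KModel

namespace sumModel

variable {ι : Type} (M : ι → KModel) (V0 : ℕ → Prop)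

theorem force_some (A : Fm) (i : ι) (w : (M i).W) :
    (sumModel M V0).force A (some ⟨i, w⟩) ↔ (M i).force A w := by
  induction A generalizing w with
  | bot => simp [KModel.force]
  | atom n => simp [KModel.force, sumModel]
  | and A B ihA ihB => simp [KModel.force, ihA, ihB]
  | or A B ihA ihB => simp [KModel.force, ihA, ihB]
  | imp A B ihA ihB =>
    constructor
    · intro H u hwu hA
      exact (ihB u).mp (H _ (Or.inr ⟨i, w, u, rfl, rfl, hwu⟩) ((ihA u).mpr hA))
    · rintro H _ (h | ⟨j, v, u, hv, rfl, hvu⟩) hA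
      · cases h
      · cases hv
        exact (ihB u).mpr (H u hvu ((ihA u).mp hA))

theorem force_imp_none (A B : Fm) :
    (sumModel M V0).force (A.imp B) none ↔
      ∀ u, (sumModel M V0).force A u → (sumModel M V0).force B u :=
  ⟨fun H u => H u (Or.inl rfl), fun H u _ => H u⟩

end sumModel

theorem stmt_14 (as : List ℕ) (imps : List (ℕ × Fm))
    (h : ∀ p ∈ imps, ¬ IPC ((bigAndL (as.map Fm.atom)).imp (Fm.atom p.1))) :
    Extendible ((bigAndL (as.map Fm.atom)).and
      (bigAndL (imps.map fun p => (Fm.atom p.1).imp p.2))) := by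
  intro ι _ M hM
  have hΓ : ∀ a ∈ as, ∀ i w, (M i).val w a := fun a ha i w =>
    ((M i).force_bigAndL_map_atom as w).mp ((hM i).2 w).1 a ha
  refine ⟨(· ∈ as), hΓ, ?_⟩
  rintro (_ | ⟨i, w⟩)
  · refine ⟨(KModel.force_bigAndL_map_atom _ as _).mpr fun a ha => ha,
      (KModel.force_bigAndL _ _ _).mpr ?_⟩
    intro _ hx
    obtain ⟨p, hp, rfl⟩ := List.mem_map.mp hx
    refine (sumModel.force_imp_none M _ _ _).mpr ?_
    rintro (_ | ⟨i, w⟩) hC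
    · exact absurd (IPC.bigAndL_imp_of_mem (List.mem_map_of_mem hC)) (h p hp)
    · have hCD := ((M i).force_bigAndL _ w).mp ((hM i).2 w).2 _ (List.mem_map_of_mem hp)
      rw [sumModel.force_some] at hC ⊢
      exact hCD w ((hM i).1.1.1 w) hC
  · exact (sumModel.force_some M _ _ i w).mpr ((hM i).2 w)
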